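/- arXiv:1504.06072 — 4 statements merged into one kernel-verified Lean document; each statement's English description precedes it below -/
import Mathlib

section
/- Let I be an open interval and let p, q, f, y : ℝ → ℝ be such that at every point x of I: f is differentiable with f'(x) = p(x)·f(x); q is differentiable; y is twice differentiable; and y''(x) + p(x)·y'(x) + q(x)·y(x) = 0. Then at every x ∈ I the function x ↦ f(x)·(y'(x)² + q(x)·y(x)²) is differentiable with derivative (f·q)'(x)·y(x)² − f'(x)·y'(x)²; equivalently, ∫ ((f(x)q(x))' y(x)² − f'(x) y'(x)²) dx = f(x)(y'(x)² + q(x) y(x)²). -/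
theorem hasDerivAt_energy_of_ode {f q y y' : ℝ → ℝ} {p q' y'' x : ℝ}
    (hf : HasDerivAt f (p * f x) x) (hq : HasDerivAt q q' x)
    (hy : HasDerivAt y (y' x) x) (hy' : HasDerivAt y' y'' x)
    (hode : y'' + p * y' x + q x * y x = 0) :
    HasDerivAt (fun t => f t * (y' t ^ 2 + q t * y t ^ 2))
      ((p * f x * q x + f x * q') * y x ^ 2 - (p * f x) * y' x ^ 2) x := by
  have hprod := hf.mul ((hy'.pow 2).add (hq.mul (hy.pow 2)))
  refine hprod.congr_deriv ?_
  simp only [Pi.add_apply, Pi.mul_apply, Pi.pow_apply]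
  -- the product rule leaves a term `2 f y' y''`; the equation trades `y''` for `-p y' - q y`
  linear_combination (2 * f x * y' x) * hode

/-- Energy-type integral: if `f' = p·f`, `q` is differentiable, `y` is twice differentiable
and `y'' + p·y' + q·y = 0` on `(a,b)`, then
`(f·(y'² + q·y²))' = (f·q)'·y² − f'·y'²` on `(a,b)`, where `(f·q)' = p·f·q + f·q'`
and `f' = p·f`. -/
theorem stmt_1 (a b : ℝ) (p q f y q' y' y'' : ℝ → ℝ)
    (hf : ∀ x ∈ Set.Ioo a b, HasDerivAt f (p x * f x) x)
    (hq : ∀ x ∈ Set.Ioo a b, HasDerivAt q (q' x) x)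
    (hy1 : ∀ x ∈ Set.Ioo a b, HasDerivAt y (y' x) x)
    (hy2 : ∀ x ∈ Set.Ioo a b, HasDerivAt y' (y'' x) x)
    (hode : ∀ x ∈ Set.Ioo a b, y'' x + p x * y' x + q x * y x = 0) :
    ∀ x ∈ Set.Ioo a b,
      HasDerivAt (fun t => f t * (y' t ^ 2 + q t * y t ^ 2))
        ((p x * f x * q x + f x * q' x) * y x ^ 2 - (p x * f x) * y' x ^ 2) x :=
  fun x hx => hasDerivAt_energy_of_ode (hf x hx) (hq x hx) (hy1 x hx) (hy2 x hx) (hode x hx)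
end

section
/- Let α, β, n, m be real numbers and let y, h : ℝ → ℝ be twice differentiable on (0, ∞) with x²·y''(x) + x·y'(x) + (α²x² − n²)·y(x) = 0 and x²·h''(x) + x·h'(x) + (β²x² − m²)·h(x) = 0 for all x > 0. Then for every x > 0 the function x ↦ x·(h'(x)·y(x) − h(x)·y'(x)) is differentiable with derivative ((α² − β²)·x − (n² − m²)/x)·h(x)·y(x); equivalently, ∫ ((α² − β²)x − (n² − m²)/x) h(x) y(x) dx = x(h'(x)y(x) − h(x)y'(x)). -/
/-- Cross-product Bessel integral: if on `(0,∞)` `y` solves Bessel's equation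
`x²y'' + xy' + (α²x² − n²)y = 0` and `h` solves `x²h'' + xh' + (β²x² − m²)h = 0`, then
`(x·(h'·y − h·y'))' = ((α² − β²)x − (n² − m²)/x)·h·y` for all `x > 0`. -/
theorem stmt_6 (α β n m : ℝ) (y h y' y'' h' h'' : ℝ → ℝ)
    (hy1 : ∀ x ∈ Set.Ioi (0 : ℝ), HasDerivAt y (y' x) x)
    (hy2 : ∀ x ∈ Set.Ioi (0 : ℝ), HasDerivAt y' (y'' x) x)
    (hh1 : ∀ x ∈ Set.Ioi (0 : ℝ), HasDerivAt h (h' x) x)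
    (hh2 : ∀ x ∈ Set.Ioi (0 : ℝ), HasDerivAt h' (h'' x) x)
    (hodey : ∀ x ∈ Set.Ioi (0 : ℝ),
      x ^ 2 * y'' x + x * y' x + (α ^ 2 * x ^ 2 - n ^ 2) * y x = 0)
    (hodeh : ∀ x ∈ Set.Ioi (0 : ℝ),
      x ^ 2 * h'' x + x * h' x + (β ^ 2 * x ^ 2 - m ^ 2) * h x = 0) :
    ∀ x ∈ Set.Ioi (0 : ℝ),
      HasDerivAt (fun t => t * (h' t * y t - h t * y' t))
        (((α ^ 2 - β ^ 2) * x - (n ^ 2 - m ^ 2) / x) * h x * y x) x := by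
  intro x hx
  have hx0 : x ≠ 0 := ne_of_gt hx
  have H : HasDerivAt (fun t => t * (h' t * y t - h t * y' t))
      (1 * (h' x * y x - h x * y' x) +
        x * ((h'' x * y x + h' x * y' x) - (h' x * y' x + h x * y'' x))) x :=
    (hasDerivAt_id x).mul (((hh2 x hx).mul (hy1 x hx)).sub ((hh1 x hx).mul (hy2 x hx)))
  convert H using 1
  have e1 := hodey x hx
  have e2 := hodeh x hx
  have hy2' : x ^ 2 * y'' x = -(x * y' x) - (α ^ 2 * x ^ 2 - n ^ 2) * y x := by linarith
  have hh2' : x ^ 2 * h'' x = -(x * h' x) - (β ^ 2 * x ^ 2 - m ^ 2) * h x := by linarith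
  have hy2'' : y'' x = (-(x * y' x) - (α ^ 2 * x ^ 2 - n ^ 2) * y x) / x ^ 2 := by
    field_simp at hy2' ⊢; linarith
  have hh2'' : h'' x = (-(x * h' x) - (β ^ 2 * x ^ 2 - m ^ 2) * h x) / x ^ 2 := by
    field_simp at hh2' ⊢; linarith
  rw [hy2'', hh2'']
  field_simp
  ring
end

section
/- Let α, β, γ be real numbers with γ not equal to zero or a negative integer, and for |x| < 1 define F(a, b, c, x) = ∑_{n=0}^∞ ((a)ₙ(b)ₙ/((c)ₙ · n!))·xⁿ, where (a)ₙ is the rising factorial a(a+1)⋯(a+n−1). Then for every x with 0 < x < 1, the function x ↦ (1/γ)·x^γ·(1−x)^(α+β−γ+1)·F(α+1, β+1, γ+1, x) is differentiable with derivative x^(γ−1)·(1−x)^(α+β−γ)·F(α, β, γ, x); equivalently, ∫ x^(γ−1)(1−x)^(α+β−γ) ₂F₁(α,β;γ;x) dx = (1/γ)·x^γ(1−x)^(α+β−γ+1) ₂F₁(α+1,β+1;γ+1;x). Here x^γ and (1−x)^(α+β−γ) denote real powers of positive reals. -/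
/-!
Write `θ = x d/dx`, `F = F(a, b; c; x)` and `G = F(a + 1, b + 1; c + 1; x)`. Since
`(a)ₙ₊₁ = a (a + 1)ₙ`, comparing coefficients gives the contiguous relation
`c F = (θ + c) G - x (θ + a + b + 1) G`, and both sides converge for `|x| < 1` because the
hypergeometric series has radius of convergence at least `1`. By the product rule the derivative
of `x ^ c (1 - x) ^ (a + b - c + 1) G` is `x ^ (c - 1) (1 - x) ^ (a + b - c)` times the right-hand
side of this relation.
-/

open scoped Nat

/-- The Gauss hypergeometric function `₂F₁(a, b; c; x)`, defined by its power series
with rising-factorial (Pochhammer) coefficients. -/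
noncomputable def gaussF (a b c x : ℝ) : ℝ :=
  ∑' n : ℕ,
    ((ascPochhammer ℝ n).eval a * (ascPochhammer ℝ n).eval b /
      ((ascPochhammer ℝ n).eval c * (n ! : ℝ))) * x ^ n

open Metric

section PowerSeries

variable {𝕜 : Type*} [RCLike 𝕜] {c : ℕ → 𝕜} {R : ℝ}

lemma summable_norm_mul_nat_mul_pow (hR : Summable fun n => ‖c n‖ * R ^ n) {r : ℝ}
    (hr : 0 ≤ r) (hrR : r < R) : Summable fun n => ‖c n‖ * n * r ^ n := by
  have hR0 : 0 < R := hr.trans_lt hrR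
  have hq : ‖r / R‖ < 1 := by
    rw [Real.norm_of_nonneg (by positivity), div_lt_one hR0]; exact hrR
  refine .of_nonneg_of_le (fun n => by positivity) (fun n => ?_)
    ((summable_pow_mul_geometric_of_norm_lt_one 1 hq).mul_left (∑' n, ‖c n‖ * R ^ n))
  have hle : ‖c n‖ * R ^ n ≤ ∑' n, ‖c n‖ * R ^ n :=
    hR.le_tsum n fun j _ => by positivity
  calc ‖c n‖ * n * r ^ n = (‖c n‖ * R ^ n) * ((n : ℝ) ^ 1 * (r / R) ^ n) := by
        rw [div_pow]; field_simp
    _ ≤ _ := mul_le_mul_of_nonneg_right hle (by positivity)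

lemma summable_mul_pow_of_norm_le (hR : Summable fun n => ‖c n‖ * R ^ n) {x : 𝕜}
    (hx : ‖x‖ ≤ R) : Summable fun n => c n * x ^ n :=
  .of_norm_bounded hR fun n => by rw [norm_mul, norm_pow]; gcongr

lemma summable_nat_mul_mul_pow (hR : Summable fun n => ‖c n‖ * R ^ n) {x : 𝕜}
    (hx : ‖x‖ < R) : Summable fun n => n * c n * x ^ n :=
  .of_norm <| (summable_norm_mul_nat_mul_pow hR (norm_nonneg x) hx).congr fun n => by
    rw [norm_mul, norm_mul, norm_pow, RCLike.norm_natCast, mul_comm (n : ℝ)]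

theorem hasDerivAt_tsum_mul_pow (hR : Summable fun n => ‖c n‖ * R ^ n) {x : 𝕜}
    (hx : ‖x‖ < R) :
    HasDerivAt (fun z => ∑' n, c n * z ^ n) (∑' n, c n * (n * x ^ (n - 1))) x := by
  obtain ⟨r, hxr, hrR⟩ := exists_between hx
  have hr : 0 < r := (norm_nonneg x).trans_lt hxr
  have hbound (n : ℕ) (y : 𝕜) (hy : y ∈ ball 0 r) :
      ‖c n * (n * y ^ (n - 1))‖ ≤ r⁻¹ * (‖c n‖ * n * r ^ n) := by
    rw [mem_ball_zero_iff] at hy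
    rcases n.eq_zero_or_pos with rfl | hn
    · simp
    rw [norm_mul, norm_mul, norm_pow, RCLike.norm_natCast, ← mul_pow_sub_one hn.ne' r]
    field_simp
    gcongr
  exact hasDerivAt_tsum_of_isPreconnected
    ((summable_norm_mul_nat_mul_pow hR hr.le hrR).mul_left r⁻¹) isOpen_ball
    (convex_ball 0 r).isPreconnected (fun n y _ => (hasDerivAt_pow n y).const_mul (c n))
    hbound (mem_ball_zero_iff.2 hxr) (summable_mul_pow_of_norm_le hR hx.le)
    (mem_ball_zero_iff.2 hxr)

lemma mul_tsum_mul_nat_mul_pow_sub_one (x : 𝕜) :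
    x * ∑' n, c n * (n * x ^ (n - 1)) = ∑' n, n * c n * x ^ n := by
  rw [← tsum_mul_left]
  congr 1 with n
  rcases n.eq_zero_or_pos with rfl | hn
  · simp
  rw [← mul_pow_sub_one hn.ne' x]
  ring

end PowerSeries

lemma ascPochhammer_succ_eval_left {S : Type*} [CommSemiring S] (n : ℕ) (a : S) :
    (ascPochhammer S (n + 1)).eval a = a * (ascPochhammer S n).eval (a + 1) := by
  simp [ascPochhammer_succ_left, Polynomial.eval_comp]

section Field

variable {𝕂 : Type*} [Field 𝕂] [CharZero 𝕂] (a b c : 𝕂) (n : ℕ)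

lemma ordinaryHypergeometricCoefficient_succ (hc : c + n ≠ 0) :
    (n + 1) * (c + n) * ordinaryHypergeometricCoefficient a b c (n + 1) =
      (a + n) * (b + n) * ordinaryHypergeometricCoefficient a b c n := by
  have hn : (n + 1 : 𝕂) ≠ 0 := n.cast_add_one_ne_zero
  simp only [ordinaryHypergeometricCoefficient, ascPochhammer_succ_eval, Nat.factorial_succ,
    Nat.cast_mul, Nat.cast_succ, mul_inv]
  field_simp

lemma ordinaryHypergeometricCoefficient_succ_shift (hc : c ≠ 0) :
    (n + 1) * c * ordinaryHypergeometricCoefficient a b c (n + 1) =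
      a * b * ordinaryHypergeometricCoefficient (a + 1) (b + 1) (c + 1) n := by
  have hn : (n + 1 : 𝕂) ≠ 0 := n.cast_add_one_ne_zero
  simp only [ordinaryHypergeometricCoefficient, ascPochhammer_succ_eval_left, Nat.factorial_succ,
    Nat.cast_mul, Nat.cast_succ, mul_inv]
  field_simp

lemma ordinaryHypergeometricCoefficient_contiguous (hc : c ≠ 0) (hcn : c + 1 + n ≠ 0) :
    (c + (n + 1)) * ordinaryHypergeometricCoefficient (a + 1) (b + 1) (c + 1) (n + 1) =
      c * ordinaryHypergeometricCoefficient a b c (n + 1) +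
        (a + b + 1 + n) * ordinaryHypergeometricCoefficient (a + 1) (b + 1) (c + 1) n := by
  refine mul_left_cancel₀ n.cast_add_one_ne_zero ?_
  linear_combination ordinaryHypergeometricCoefficient_succ (a + 1) (b + 1) (c + 1) n hcn -
    ordinaryHypergeometricCoefficient_succ_shift a b c n hc

end Field

section RCLike

variable {𝕂 : Type*} [RCLike 𝕂] (a b c : 𝕂)

theorem one_le_radius_ordinaryHypergeometricSeries (𝔸 : Type*) [NormedDivisionRing 𝔸]
    [NormedAlgebra 𝕂 𝔸] : 1 ≤ (ordinaryHypergeometricSeries 𝔸 a b c).radius := by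
  -- a nonpositive integer parameter makes the series terminate (for `c` via `0⁻¹ = 0`)
  by_cases h : ∃ k : ℕ, (k : 𝕂) = -a ∨ (k : 𝕂) = -b ∨ (k : 𝕂) = -c
  · obtain ⟨k, hk | hk | hk⟩ := h <;> rw [← neg_eq_iff_eq_neg.mpr hk]
    · rw [ordinaryHypergeometric_radius_top_of_neg_nat₁]; exact le_top
    · rw [ordinaryHypergeometric_radius_top_of_neg_nat₂]; exact le_top
    · rw [ordinaryHypergeometric_radius_top_of_neg_nat₃]; exact le_top
  · push Not at h
    exact (ordinaryHypergeometricSeries_radius_eq_one 𝔸 a b c h).ge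

lemma exists_summable_norm_ordinaryHypergeometricCoefficient_mul_pow {ρ : ℝ} (hρ : ρ < 1) :
    ∃ R, ρ < R ∧ Summable fun n => ‖ordinaryHypergeometricCoefficient a b c n‖ * R ^ n := by
  obtain ⟨R, hρR, hR1⟩ := exists_between (max_lt hρ zero_lt_one)
  have hR0 : 0 ≤ R := (le_max_right ρ 0).trans hρR.le
  refine ⟨R, (le_max_left ρ 0).trans_lt hρR, ?_⟩
  have hR : (R.toNNReal : ENNReal) < (ordinaryHypergeometricSeries 𝕂 a b c).radius :=
    (ENNReal.coe_lt_one_iff.mpr (Real.toNNReal_lt_one.mpr hR1)).trans_le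
      (one_le_radius_ordinaryHypergeometricSeries a b c 𝕂)
  simpa [ordinaryHypergeometricSeries, FormalMultilinearSeries.ofScalars_norm, hR0] using
    (ordinaryHypergeometricSeries 𝕂 a b c).summable_norm_mul_pow hR


theorem tsum_ordinaryHypergeometricCoefficient_contiguous (hc : c ≠ 0)
    (hcn : ∀ n : ℕ, c + 1 + n ≠ 0) {x : 𝕂} (hx : ‖x‖ < 1) :
    c * ∑' n, ordinaryHypergeometricCoefficient a b c n * x ^ n =
      c * ∑' n, ordinaryHypergeometricCoefficient (a + 1) (b + 1) (c + 1) n * x ^ n +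
        ∑' n, n * ordinaryHypergeometricCoefficient (a + 1) (b + 1) (c + 1) n * x ^ n -
      x * ((a + b + 1) * ∑' n, ordinaryHypergeometricCoefficient (a + 1) (b + 1) (c + 1) n * x ^ n +
        ∑' n, n * ordinaryHypergeometricCoefficient (a + 1) (b + 1) (c + 1) n * x ^ n) := by
  set C := ordinaryHypergeometricCoefficient a b c
  set D := ordinaryHypergeometricCoefficient (a + 1) (b + 1) (c + 1)
  obtain ⟨R, hxR, hC⟩ := exists_summable_norm_ordinaryHypergeometricCoefficient_mul_pow a b c hx
  obtain ⟨R', hxR', hD⟩ :=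
    exists_summable_norm_ordinaryHypergeometricCoefficient_mul_pow (a + 1) (b + 1) (c + 1) hx
  have sumC := summable_mul_pow_of_norm_le hC hxR.le
  have sumD := summable_mul_pow_of_norm_le hD hxR'.le
  have sumND := summable_nat_mul_mul_pow hD hxR'
  set f : ℕ → 𝕂 := fun n => c * (D n * x ^ n) + n * D n * x ^ n
  set g : ℕ → 𝕂 := fun n => (a + b + 1) * (D n * x ^ n) + n * D n * x ^ n
  have sumF : Summable f := (sumD.mul_left c).add sumND
  have sumG : Summable g := (sumD.mul_left _).add sumND
  calc c * ∑' n, C n * x ^ n = c * (C 0 * x ^ 0) + ∑' n, c * (C (n + 1) * x ^ (n + 1)) := by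
        rw [sumC.tsum_eq_zero_add, mul_add, tsum_mul_left]
    _ = f 0 + ∑' n, (f (n + 1) - x * g n) := by
        congr 1
        · simp [f, C, D, ordinaryHypergeometricCoefficient]
        refine tsum_congr fun n => ?_
        simp only [f, g]
        push_cast
        linear_combination -x ^ (n + 1) *
          ordinaryHypergeometricCoefficient_contiguous a b c n hc (hcn n)
    _ = ∑' n, f n - x * ∑' n, g n := by
        rw [sumF.tsum_eq_zero_add,
          Summable.tsum_sub ((summable_nat_add_iff 1).2 sumF) (sumG.mul_left x), tsum_mul_left]
        ring
    _ = _ := by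
        rw [(sumD.mul_left c).tsum_add sumND, (sumD.mul_left _).tsum_add sumND, tsum_mul_left,
          tsum_mul_left]

end RCLike

lemma hasDerivAt_rpow_mul_one_sub_rpow {p q x : ℝ} (hx0 : 0 < x) (hx1 : x < 1) :
    HasDerivAt (fun t => t ^ p * (1 - t) ^ q)
      (x ^ (p - 1) * (1 - x) ^ (q - 1) * (p * (1 - x) - q * x)) x := by
  have h1x : 0 < 1 - x := sub_pos.mpr hx1
  have hq : HasDerivAt (fun t => (1 - t) ^ q) (q * (1 - x) ^ (q - 1) * -1) x :=
    (Real.hasDerivAt_rpow_const (Or.inl h1x.ne')).comp x ((hasDerivAt_id x).const_sub 1)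
  refine ((Real.hasDerivAt_rpow_const (p := p) (Or.inl hx0.ne')).mul hq).congr_deriv ?_
  rw [show x ^ p = x ^ (p - 1) * x by rw [← Real.rpow_add_one hx0.ne', sub_add_cancel],
    show (1 - x) ^ q = (1 - x) ^ (q - 1) * (1 - x) by
      rw [← Real.rpow_add_one h1x.ne', sub_add_cancel]]
  ring

lemma gaussF_eq_tsum (a b c x : ℝ) :
    gaussF a b c x = ∑' n, ordinaryHypergeometricCoefficient a b c n * x ^ n :=
  tsum_congr fun n => by rw [div_eq_mul_inv, mul_inv]; ring

/-- Indefinite integral of the Gauss hypergeometric function: if `γ` is not zero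
or a negative integer, then for `0 < x < 1`
`((1/γ)·x^γ·(1−x)^(α+β−γ+1)·₂F₁(α+1,β+1;γ+1;x))'
  = x^(γ−1)·(1−x)^(α+β−γ)·₂F₁(α,β;γ;x)`, where powers are real powers. -/
theorem stmt_14 (α β γ : ℝ) (hγ : ∀ n : ℕ, γ ≠ -(n : ℝ)) :
    ∀ x : ℝ, 0 < x → x < 1 →
      HasDerivAt
        (fun t => (1 / γ) * t ^ γ * (1 - t) ^ (α + β - γ + 1) *
          gaussF (α + 1) (β + 1) (γ + 1) t)
        (x ^ (γ - 1) * (1 - x) ^ (α + β - γ) * gaussF α β γ x) x := by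
  intro x hx0 hx1
  have hγ0 : γ ≠ 0 := by simpa using hγ 0
  have hγn (n : ℕ) : γ + 1 + n ≠ 0 := fun h => hγ (n + 1) (by push_cast; linear_combination h)
  have hx : ‖x‖ < 1 := by rwa [Real.norm_of_nonneg hx0.le]
  obtain ⟨R, hxR, hR⟩ :=
    exists_summable_norm_ordinaryHypergeometricCoefficient_mul_pow (α + 1) (β + 1) (γ + 1) hx
  have hG := hasDerivAt_tsum_mul_pow hR hxR
  have hkey := tsum_ordinaryHypergeometricCoefficient_contiguous α β γ hγ0 hγn hx
  rw [← mul_tsum_mul_nat_mul_pow_sub_one x] at hkey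
  simp only [← gaussF_eq_tsum] at hG hkey
  set G' := ∑' n, ordinaryHypergeometricCoefficient (α + 1) (β + 1) (γ + 1) n * (n * x ^ (n - 1))
  have hP := (hasDerivAt_rpow_mul_one_sub_rpow (p := γ) (q := α + β - γ + 1) hx0 hx1).const_mul
    (1 / γ)
  refine ((hP.mul hG).congr_deriv ?_).congr_of_eventuallyEq
    (.of_forall fun t => by simp only [Pi.mul_apply]; ring)
  rw [add_sub_cancel_right, Real.rpow_add_one (sub_pos.mpr hx1).ne',
    show x ^ γ = x ^ (γ - 1) * x by rw [← Real.rpow_add_one hx0.ne', sub_add_cancel]]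
  field_simp
  linear_combination -(1 - x) ^ (α + β - γ) * hkey
end

section
/- For 0 < k < 1, the function k ↦ (K(k) − E(k))·(E(k)/√(1 − k²) − √(1 − k²)·K(k)) is differentiable with derivative (k/√(1 − k²))³·E(k)·K(k); equivalently, ∫ (k/k')³ E(k) K(k) dk = (K(k) − E(k))(E(k)/k' − k'·K(k)). -/
/-!
Differentiating under the integral sign in the modulus gives `k E' = E − K` and
`k K' = ∫₀^{π/2} Δ^{-3/2} − K`, where `Δ = 1 − k² sin² θ`. Since
`d/dθ (k² sin θ cos θ Δ^{-1/2}) = Δ^{1/2} − k'² Δ^{-3/2}`, that last integral is `E / k'²`. Hence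
`(K − E)' = k E / k'²` and `(E / k' − k' K)' = k E / k'³`, and the product rule gives
`k E (K − E + E − k'² K) / k'³ = (k / k')³ E K`.
-/

open Real

/-- The complete elliptic integral of the first kind,
`K(k) = ∫₀^{π/2} (1 − k² sin²θ)^{−1/2} dθ`. -/
noncomputable def ellipticK (k : ℝ) : ℝ :=
  ∫ θ in (0:ℝ)..(π / 2), (1 - k ^ 2 * Real.sin θ ^ 2) ^ (-(1:ℝ) / 2)

/-- The complete elliptic integral of the second kind,
`E(k) = ∫₀^{π/2} (1 − k² sin²θ)^{1/2} dθ`. -/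
noncomputable def ellipticE (k : ℝ) : ℝ :=
  ∫ θ in (0:ℝ)..(π / 2), (1 - k ^ 2 * Real.sin θ ^ 2) ^ ((1:ℝ) / 2)

lemma one_sub_sq_mul_sin_sq_pos {k : ℝ} (hk : k ^ 2 < 1) (θ : ℝ) : 0 < 1 - k ^ 2 * sin θ ^ 2 := by
  nlinarith [sin_sq_le_one θ, sq_nonneg k]

lemma continuous_one_sub_sq_mul_sin_sq_rpow {k : ℝ} (hk : k ^ 2 < 1) (p : ℝ) :
    Continuous fun θ => (1 - k ^ 2 * sin θ ^ 2) ^ p :=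
  (by fun_prop : Continuous fun θ => 1 - k ^ 2 * sin θ ^ 2).rpow_const
    fun θ => Or.inl (one_sub_sq_mul_sin_sq_pos hk θ).ne'

lemma intervalIntegrable_one_sub_sq_mul_sin_sq_rpow {k : ℝ} (hk : k ^ 2 < 1) (p a b : ℝ) :
    IntervalIntegrable (fun θ => (1 - k ^ 2 * sin θ ^ 2) ^ p) MeasureTheory.volume a b :=
  (continuous_one_sub_sq_mul_sin_sq_rpow hk p).intervalIntegrable a b

lemma hasDerivAt_one_sub_sq_mul_sin_sq_rpow {x : ℝ} (hx : x ^ 2 < 1) (p θ : ℝ) :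
    HasDerivAt (fun x => (1 - x ^ 2 * sin θ ^ 2) ^ p)
      (-(2 * x) * sin θ ^ 2 * p * (1 - x ^ 2 * sin θ ^ 2) ^ (p - 1)) x := by
  have h : HasDerivAt (fun x => 1 - x ^ 2 * sin θ ^ 2) (-(2 * x) * sin θ ^ 2) x := by
    simpa using ((hasDerivAt_pow 2 x).mul_const (sin θ ^ 2)).const_sub 1
  exact h.rpow_const (Or.inl (one_sub_sq_mul_sin_sq_pos hx θ).ne')

lemma norm_deriv_one_sub_sq_mul_sin_sq_rpow_le {p : ℝ} (hp : p ≤ 1) {x b : ℝ} (hxb : |x| ≤ b)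
    (hb : b < 1) (θ : ℝ) :
    ‖-(2 * x) * sin θ ^ 2 * p * (1 - x ^ 2 * sin θ ^ 2) ^ (p - 1)‖
      ≤ 2 * b * |p| * (1 - b ^ 2) ^ (p - 1) := by
  have hs0 := sq_nonneg (sin θ)
  have hs1 := sin_sq_le_one θ
  have hx2 : x ^ 2 ≤ b ^ 2 := sq_le_sq' (abs_le.1 hxb).1 (abs_le.1 hxb).2
  have hb0 : 0 < 1 - b ^ 2 := by nlinarith [abs_nonneg x]
  have hΔ : 1 - b ^ 2 ≤ 1 - x ^ 2 * sin θ ^ 2 := by nlinarith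
  have hpow : (1 - x ^ 2 * sin θ ^ 2) ^ (p - 1) ≤ (1 - b ^ 2) ^ (p - 1) :=
    rpow_le_rpow_of_nonpos hb0 hΔ (by linarith)
  have hpow0 : 0 ≤ (1 - x ^ 2 * sin θ ^ 2) ^ (p - 1) := rpow_nonneg (by linarith) _
  have hsx : 2 * |x| * sin θ ^ 2 ≤ 2 * b := by nlinarith [abs_nonneg x]
  rw [norm_mul, norm_mul, norm_mul, norm_neg, norm_mul, Real.norm_of_nonneg hs0,
    Real.norm_of_nonneg hpow0, Real.norm_two, Real.norm_eq_abs, Real.norm_eq_abs]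
  exact mul_le_mul (mul_le_mul_of_nonneg_right hsx (abs_nonneg p)) hpow hpow0
    (mul_nonneg (by linarith [abs_nonneg x]) (abs_nonneg p))

lemma hasDerivAt_integral_one_sub_sq_mul_sin_sq_rpow {p : ℝ} (hp : p ≤ 1) {k : ℝ} (hk : |k| < 1)
    (a b : ℝ) :
    HasDerivAt (fun x => ∫ θ in a..b, (1 - x ^ 2 * sin θ ^ 2) ^ p)
      (∫ θ in a..b, -(2 * k) * sin θ ^ 2 * p * (1 - k ^ 2 * sin θ ^ 2) ^ (p - 1)) k := by
  set r := (1 + |k|) / 2 with hr_def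
  have hr : r < 1 := by linarith
  have hε : 0 < (1 - |k|) / 2 := by linarith
  have hball : ∀ x ∈ Metric.ball k ((1 - |k|) / 2), |x| ≤ r ∧ x ^ 2 < 1 := by
    intro x hx
    have hxk := abs_sub_abs_le_abs_sub x k
    rw [Metric.mem_ball, Real.dist_eq] at hx
    exact ⟨by linarith, (sq_lt_one_iff_abs_lt_one x).2 (by linarith)⟩
  have hk2 : k ^ 2 < 1 := (sq_lt_one_iff_abs_lt_one k).2 hk
  refine (intervalIntegral.hasDerivAt_integral_of_dominated_loc_of_deriv_le
    (F := fun x θ => (1 - x ^ 2 * sin θ ^ 2) ^ p)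
    (F' := fun x θ => -(2 * x) * sin θ ^ 2 * p * (1 - x ^ 2 * sin θ ^ 2) ^ (p - 1))
    (bound := fun _ => 2 * r * |p| * (1 - r ^ 2) ^ (p - 1))
    (Metric.ball_mem_nhds k hε) ?_ (intervalIntegrable_one_sub_sq_mul_sin_sq_rpow hk2 p a b)
    ?_ ?_ intervalIntegrable_const ?_).2
  · filter_upwards [Metric.ball_mem_nhds k hε] with x hx
    exact (continuous_one_sub_sq_mul_sin_sq_rpow (hball x hx).2 p).aestronglyMeasurable
  · exact ((by fun_prop : Continuous fun θ => -(2 * k) * sin θ ^ 2 * p).mul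
      (continuous_one_sub_sq_mul_sin_sq_rpow hk2 (p - 1))).aestronglyMeasurable
  · exact .of_forall fun θ _ x hx =>
      norm_deriv_one_sub_sq_mul_sin_sq_rpow_le hp (hball x hx).1 hr θ
  · exact .of_forall fun θ _ x hx => hasDerivAt_one_sub_sq_mul_sin_sq_rpow (hball x hx).2 p θ

lemma hasDerivAt_sq_mul_sin_mul_cos_mul_rpow {k : ℝ} (hk : k ^ 2 < 1) (θ : ℝ) :
    HasDerivAt (fun θ => k ^ 2 * (sin θ * cos θ) * (1 - k ^ 2 * sin θ ^ 2) ^ (-(1:ℝ) / 2))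
      ((1 - k ^ 2 * sin θ ^ 2) ^ ((1:ℝ) / 2)
        - (1 - k ^ 2) * (1 - k ^ 2 * sin θ ^ 2) ^ (-(3:ℝ) / 2)) θ := by
  set Δ := 1 - k ^ 2 * sin θ ^ 2 with hΔ
  have hΔ0 : 0 < Δ := one_sub_sq_mul_sin_sq_pos hk θ
  have hΔ' : HasDerivAt (fun θ => 1 - k ^ 2 * sin θ ^ 2) (-(k ^ 2 * (2 * sin θ * cos θ))) θ := by
    simpa using (((hasDerivAt_sin θ).pow 2).const_mul (k ^ 2)).const_sub 1
  refine (((hasDerivAt_sin θ).mul (hasDerivAt_cos θ)).const_mul (k ^ 2) |>.mul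
    (hΔ'.rpow_const (p := -(1:ℝ) / 2) (Or.inl hΔ0.ne'))).congr_deriv ?_
  have e1 : Δ ^ (-(1:ℝ) / 2 - 1) = Δ ^ (-(3:ℝ) / 2) := by norm_num
  have e2 : Δ ^ (-(1:ℝ) / 2) = Δ ^ (-(3:ℝ) / 2) * Δ := by
    rw [← rpow_add_one hΔ0.ne']; norm_num
  have e3 : Δ ^ ((1:ℝ) / 2) = Δ ^ (-(3:ℝ) / 2) * Δ ^ 2 := by
    rw [← rpow_add_natCast hΔ0.ne']; norm_num
  simp only [Pi.mul_apply]
  rw [e1, e2, e3, hΔ]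
  linear_combination k ^ 2 * Δ ^ (-(3:ℝ) / 2) * sin_sq_add_cos_sq θ

lemma one_sub_sq_mul_integral_rpow_neg_three_halves {k : ℝ} (hk : k ^ 2 < 1) :
    (1 - k ^ 2) * ∫ θ in (0:ℝ)..π / 2, (1 - k ^ 2 * sin θ ^ 2) ^ (-(3:ℝ) / 2) = ellipticE k := by
  have hI := intervalIntegrable_one_sub_sq_mul_sin_sq_rpow hk
  have hFTC := intervalIntegral.integral_eq_sub_of_hasDerivAt
    (fun θ _ => hasDerivAt_sq_mul_sin_mul_cos_mul_rpow hk θ)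
    ((hI _ 0 (π / 2)).sub ((hI _ 0 (π / 2)).const_mul _))
  rw [intervalIntegral.integral_sub (hI _ 0 (π / 2)) ((hI _ 0 (π / 2)).const_mul _),
    intervalIntegral.integral_const_mul] at hFTC
  simp only [sin_zero, cos_zero, cos_pi_div_two, mul_zero, zero_mul, sub_zero] at hFTC
  rw [ellipticE]
  linarith

lemma hasDerivAt_ellipticE {k : ℝ} (hk0 : k ≠ 0) (hk : |k| < 1) :
    HasDerivAt ellipticE ((ellipticE k - ellipticK k) / k) k := by
  have hk2 : k ^ 2 < 1 := (sq_lt_one_iff_abs_lt_one k).2 hk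
  have hI := intervalIntegrable_one_sub_sq_mul_sin_sq_rpow hk2
  refine (hasDerivAt_integral_one_sub_sq_mul_sin_sq_rpow (p := 1 / 2) (by norm_num) hk 0 (π / 2) :
    HasDerivAt ellipticE _ k).congr_deriv ?_
  rw [ellipticE, ellipticK, ← intervalIntegral.integral_sub (hI _ _ _) (hI _ _ _),
    ← intervalIntegral.integral_div]
  refine intervalIntegral.integral_congr fun θ _ => ?_
  have hΔ0 := one_sub_sq_mul_sin_sq_pos hk2 θ
  have e : (1 - k ^ 2 * sin θ ^ 2) ^ (-(1:ℝ) / 2)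
      = (1 - k ^ 2 * sin θ ^ 2) ^ ((1:ℝ) / 2) / (1 - k ^ 2 * sin θ ^ 2) := by
    rw [← rpow_sub_one hΔ0.ne']; norm_num
  rw [e, show (1:ℝ) / 2 - 1 = -(1:ℝ) / 2 by norm_num, e]
  field_simp
  ring

lemma hasDerivAt_ellipticK {k : ℝ} (hk0 : k ≠ 0) (hk : |k| < 1) :
    HasDerivAt ellipticK ((ellipticE k / (1 - k ^ 2) - ellipticK k) / k) k := by
  have hk2 : k ^ 2 < 1 := (sq_lt_one_iff_abs_lt_one k).2 hk
  have hI := intervalIntegrable_one_sub_sq_mul_sin_sq_rpow hk2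
  refine (hasDerivAt_integral_one_sub_sq_mul_sin_sq_rpow (p := -(1:ℝ) / 2) (by norm_num) hk 0
    (π / 2) : HasDerivAt ellipticK _ k).congr_deriv ?_
  rw [← one_sub_sq_mul_integral_rpow_neg_three_halves hk2, mul_div_cancel_left₀ _ (by linarith : 1 - k ^ 2 ≠ 0),
    ellipticK, ← intervalIntegral.integral_sub (hI _ _ _) (hI _ _ _),
    ← intervalIntegral.integral_div]
  refine intervalIntegral.integral_congr fun θ _ => ?_
  have hΔ0 := one_sub_sq_mul_sin_sq_pos hk2 θ
  rw [show -(1:ℝ) / 2 - 1 = -(3:ℝ) / 2 by norm_num,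
    show -(1:ℝ) / 2 = -(3:ℝ) / 2 + 1 by norm_num, rpow_add_one hΔ0.ne']
  field_simp
  ring

lemma hasDerivAt_ellipticK_sub_ellipticE {k : ℝ} (hk0 : k ≠ 0) (hk : |k| < 1) :
    HasDerivAt (fun t => ellipticK t - ellipticE t) (k * ellipticE k / (1 - k ^ 2)) k := by
  have hk' : 1 - k ^ 2 ≠ 0 := by linarith [(sq_lt_one_iff_abs_lt_one k).2 hk]
  refine ((hasDerivAt_ellipticK hk0 hk).sub (hasDerivAt_ellipticE hk0 hk)).congr_deriv ?_
  field_simp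
  ring

lemma hasDerivAt_ellipticE_div_sqrt_sub_sqrt_mul_ellipticK {k : ℝ} (hk0 : k ≠ 0) (hk : |k| < 1) :
    HasDerivAt (fun t => ellipticE t / √(1 - t ^ 2) - √(1 - t ^ 2) * ellipticK t)
      (k * ellipticE k / √(1 - k ^ 2) ^ 3) k := by
  have hk' : 0 < 1 - k ^ 2 := by linarith [(sq_lt_one_iff_abs_lt_one k).2 hk]
  have hsqrt : HasDerivAt (fun t => √(1 - t ^ 2)) (-(2 * k) / (2 * √(1 - k ^ 2))) k := by
    simpa using ((hasDerivAt_pow 2 k).const_sub 1).sqrt hk'.ne'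
  have hc0 : √(1 - k ^ 2) ≠ 0 := (sqrt_pos.2 hk').ne'
  refine (((hasDerivAt_ellipticE hk0 hk).div hsqrt hc0).sub
    (hsqrt.mul (hasDerivAt_ellipticK hk0 hk))).congr_deriv ?_
  have hc2 : √(1 - k ^ 2) ^ 2 = 1 - k ^ 2 := sq_sqrt hk'.le
  generalize √(1 - k ^ 2) = c at hc0 hc2 ⊢
  rw [← hc2]
  field_simp
  linear_combination (ellipticK k * c ^ 2) * hc2

/-- `∫ (k/k')³·E(k)·K(k) dk = (K(k) − E(k))·(E(k)/k' − k'·K(k))` for `0 < k < 1`,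
where `k' = √(1 − k²)`. -/
theorem stmt_18 :
    ∀ k : ℝ, 0 < k → k < 1 →
      HasDerivAt
        (fun t => (ellipticK t - ellipticE t) *
          (ellipticE t / Real.sqrt (1 - t ^ 2) - Real.sqrt (1 - t ^ 2) * ellipticK t))
        ((k / Real.sqrt (1 - k ^ 2)) ^ 3 * ellipticE k * ellipticK k) k := by
  intro k hk0 hk1
  have habs : |k| < 1 := by rwa [abs_of_pos hk0]
  have hk' : 0 < 1 - k ^ 2 := by nlinarith
  refine ((hasDerivAt_ellipticK_sub_ellipticE hk0.ne' habs).mul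
    (hasDerivAt_ellipticE_div_sqrt_sub_sqrt_mul_ellipticK hk0.ne' habs)).congr_deriv ?_
  have hc0 : √(1 - k ^ 2) ≠ 0 := (sqrt_pos.2 hk').ne'
  have hc2 : √(1 - k ^ 2) ^ 2 = 1 - k ^ 2 := sq_sqrt hk'.le
  generalize √(1 - k ^ 2) = c at hc0 hc2 ⊢
  rw [← hc2]
  field_simp
  linear_combination (-(ellipticE k * ellipticK k)) * hc2
end
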